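/- arXiv:2308.03697 — 8 statements merged into one kernel-verified Lean document; each statement's English description precedes it below -/
import Mathlib

section
/- Let M be a metric space. The function d on pairs of Jordan domains in M, defined by d(D₁, D₂) := the infimum over all parametrizations f₁ of D₁ and f₂ of D₂ of sup_{p ∈ B²} dist(f₁ p, f₂ p), is a metric on the collection of Jordan domains in M: d(D₁,D₂) is a finite nonnegative real number, d(D,D) = 0, d(D₁,D₂) = d(D₂,D₁), d(D₁,D₃) ≤ d(D₁,D₂) + d(D₂,D₃), and d(D₁,D₂) = 0 implies D₁ = D₂. -/
/-!
Two parametrizations `f, g` of the same Jordan domain differ by a self-homeomorphism `φ` of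
the disk, since a continuous bijection from a compact space onto a Hausdorff space is a
homeomorphism. Reparametrizing a third domain by the same `φ` turns two parametrizations of
the middle domain into a single one, and the triangle inequality follows pointwise.
If `jdist D₁ D₂ = 0`, every point of `D₁` lies within every `ε > 0` of `D₂`, which is compact,
hence closed, so `D₁ ⊆ D₂`.
-/

noncomputable section

/-- The Euclidean plane. -/
abbrev Plane := EuclideanSpace ℝ (Fin 2)

/-- The closed unit disk in the Euclidean plane. -/
def B2 : Set Plane := Metric.closedBall 0 1

/-- `f` is a parametrization of `D`: a continuous injective map of the closed unit disk
onto `D`. -/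
def IsParam {M : Type*} [MetricSpace M] (f : Plane → M) (D : Set M) : Prop :=
  ContinuousOn f B2 ∧ Set.InjOn f B2 ∧ f '' B2 = D

/-- A Jordan domain in a metric space `M` is the image of a continuous injective map
of the closed unit disk. -/
def IsJordanDomain {M : Type*} [MetricSpace M] (D : Set M) : Prop :=
  ∃ f, IsParam f D

/-- The set of candidate values for the distance between two Jordan domains. -/
def jdistSet {M : Type*} [MetricSpace M] (D₁ D₂ : Set M) : Set ℝ :=
  { r | ∃ f₁ f₂, IsParam f₁ D₁ ∧ IsParam f₂ D₂ ∧
      r = sSup ((fun p => dist (f₁ p) (f₂ p)) '' B2) }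

/-- The distance between Jordan domains: the infimum over parametrizations of the sup
distance. -/
noncomputable def jdist {M : Type*} [MetricSpace M] (D₁ D₂ : Set M) : ℝ :=
  sInf (jdistSet D₁ D₂)

open Set Metric

lemma isCompact_B2 : IsCompact B2 := isCompact_closedBall 0 1

lemma zero_mem_B2 : (0 : Plane) ∈ B2 := mem_closedBall_self zero_le_one

lemma B2_nonempty : B2.Nonempty := ⟨0, zero_mem_B2⟩

instance : CompactSpace B2 := isCompact_iff_compactSpace.mp isCompact_B2

section Jordan

variable {M : Type*} [MetricSpace M]

section Param

variable {f g : Plane → M} {D : Set M}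

lemma isParam_iff_domRestrict :
    IsParam f D ↔ Continuous (B2.domRestrict f) ∧ Function.Injective (B2.domRestrict f) ∧
      range (B2.domRestrict f) = D := by
  rw [IsParam, continuousOn_iff_continuous_domRestrict, injOn_iff_injective, range_domRestrict]

lemma IsParam.mem {p : Plane} (hf : IsParam f D) (hp : p ∈ B2) : f p ∈ D :=
  hf.2.2 ▸ mem_image_of_mem f hp

lemma IsParam.isCompact (hf : IsParam f D) : IsCompact D :=
  hf.2.2 ▸ isCompact_B2.image_of_continuousOn hf.1

lemma IsParam.exists_homeomorph_comp_eq (hf : IsParam f D) (hg : IsParam g D) :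
    ∃ φ : B2 ≃ₜ B2, ∀ x : B2, g (φ x) = f x := by
  rw [isParam_iff_domRestrict] at hf hg
  obtain ⟨hfc, hfi, hfr⟩ := hf
  obtain ⟨hgc, hgi, hgr⟩ := hg
  let ef := (hfc.isClosedEmbedding hfi).isEmbedding.toHomeomorph
  let eg := (hgc.isClosedEmbedding hgi).isEmbedding.toHomeomorph
  refine ⟨ef.trans ((Homeomorph.setCongr (hfr.trans hgr.symm)).trans eg.symm), fun x => ?_⟩
  change ((eg (eg.symm _) : M)) = _
  rw [eg.apply_symm_apply]
  rfl

lemma IsParam.exists_isParam_eq_comp_homeomorph (hg : IsParam g D) (φ : B2 ≃ₜ B2) :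
    ∃ F : Plane → M, IsParam F D ∧ ∀ x : B2, F x = g (φ x) := by
  let ψ : Plane → Plane := Function.extend Subtype.val (fun x => (φ x : Plane)) id
  have hψ : ∀ x : B2, ψ x = φ x := Subtype.val_injective.extend_apply _ _
  have hrestrict : B2.domRestrict (g ∘ ψ) = B2.domRestrict g ∘ φ := by
    funext x
    simp only [domRestrict_apply, Function.comp_apply, hψ]
  refine ⟨g ∘ ψ, ?_, fun x => congrArg g (hψ x)⟩
  rw [isParam_iff_domRestrict] at hg ⊢
  obtain ⟨hc, hi, hr⟩ := hg
  rw [hrestrict, EquivLike.range_comp]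
  exact ⟨hc.comp φ.continuous, hi.comp φ.injective, hr⟩

end Param

def supDist (f g : Plane → M) : ℝ := sSup ((fun p => dist (f p) (g p)) '' B2)

section SupDist

variable {f g : Plane → M}

lemma dist_le_supDist (hf : ContinuousOn f B2) (hg : ContinuousOn g B2) {p : Plane}
    (hp : p ∈ B2) : dist (f p) (g p) ≤ supDist f g :=
  le_csSup (isCompact_B2.image_of_continuousOn
    (continuous_dist.comp_continuousOn (hf.prodMk hg))).bddAbove (mem_image_of_mem _ hp)

lemma supDist_le {r : ℝ} (h : ∀ p ∈ B2, dist (f p) (g p) ≤ r) : supDist f g ≤ r :=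
  csSup_le (B2_nonempty.image _) <| forall_mem_image.mpr h

lemma supDist_nonneg (hf : ContinuousOn f B2) (hg : ContinuousOn g B2) : 0 ≤ supDist f g :=
  dist_nonneg.trans (dist_le_supDist hf hg zero_mem_B2)

lemma supDist_self (f : Plane → M) : supDist f f = 0 := by
  simp only [supDist, dist_self, B2_nonempty.image_const, csSup_singleton]

lemma supDist_comm (f g : Plane → M) : supDist f g = supDist g f := by
  simp only [supDist, dist_comm]

end SupDist

section Jdist

variable {D D₁ D₂ D₃ : Set M} {f₁ f₂ : Plane → M}

lemma supDist_mem_jdistSet (h₁ : IsParam f₁ D₁) (h₂ : IsParam f₂ D₂) :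
    supDist f₁ f₂ ∈ jdistSet D₁ D₂ :=
  ⟨f₁, f₂, h₁, h₂, rfl⟩

lemma jdistSet_nonempty (h₁ : IsJordanDomain D₁) (h₂ : IsJordanDomain D₂) :
    (jdistSet D₁ D₂).Nonempty :=
  let ⟨_, hf₁⟩ := h₁
  let ⟨_, hf₂⟩ := h₂
  ⟨_, supDist_mem_jdistSet hf₁ hf₂⟩

lemma nonneg_of_mem_jdistSet {r : ℝ} (hr : r ∈ jdistSet D₁ D₂) : 0 ≤ r := by
  obtain ⟨f₁, f₂, hf₁, hf₂, rfl⟩ := hr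
  exact supDist_nonneg hf₁.1 hf₂.1

lemma jdistSet_bddBelow (D₁ D₂ : Set M) : BddBelow (jdistSet D₁ D₂) :=
  ⟨0, fun _ => nonneg_of_mem_jdistSet⟩

lemma jdist_le_supDist (h₁ : IsParam f₁ D₁) (h₂ : IsParam f₂ D₂) :
    jdist D₁ D₂ ≤ supDist f₁ f₂ :=
  csInf_le (jdistSet_bddBelow D₁ D₂) (supDist_mem_jdistSet h₁ h₂)

lemma jdist_nonneg (D₁ D₂ : Set M) : 0 ≤ jdist D₁ D₂ := by
  rcases (jdistSet D₁ D₂).eq_empty_or_nonempty with h | h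
  · rw [jdist, h, Real.sInf_empty]
  · exact le_csInf h fun _ => nonneg_of_mem_jdistSet

lemma jdist_self (hD : IsJordanDomain D) : jdist D D = 0 := by
  obtain ⟨f, hf⟩ := hD
  exact le_antisymm (supDist_self f ▸ jdist_le_supDist hf hf) (jdist_nonneg D D)

lemma jdistSet_comm (D₁ D₂ : Set M) : jdistSet D₁ D₂ = jdistSet D₂ D₁ := by
  ext r
  constructor <;>
  · rintro ⟨f₁, f₂, hf₁, hf₂, rfl⟩
    exact ⟨f₂, f₁, hf₂, hf₁, supDist_comm f₁ f₂⟩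

lemma jdist_comm (D₁ D₂ : Set M) : jdist D₁ D₂ = jdist D₂ D₁ := by
  rw [jdist, jdist, jdistSet_comm]

lemma jdist_le_supDist_add_supDist {g₂ g₃ : Plane → M} (hf₁ : IsParam f₁ D₁)
    (hf₂ : IsParam f₂ D₂) (hg₂ : IsParam g₂ D₂) (hg₃ : IsParam g₃ D₃) :
    jdist D₁ D₃ ≤ supDist f₁ f₂ + supDist g₂ g₃ := by
  obtain ⟨φ, hφ⟩ := hf₂.exists_homeomorph_comp_eq hg₂
  obtain ⟨F, hF, hFφ⟩ := hg₃.exists_isParam_eq_comp_homeomorph φ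
  refine (jdist_le_supDist hf₁ hF).trans (supDist_le fun p hp => ?_)
  calc dist (f₁ p) (F p) ≤ dist (f₁ p) (f₂ p) + dist (f₂ p) (F p) := dist_triangle _ _ _
    _ = dist (f₁ p) (f₂ p) + dist (g₂ (φ ⟨p, hp⟩)) (g₃ (φ ⟨p, hp⟩)) := by
      rw [← hφ ⟨p, hp⟩, ← hFφ ⟨p, hp⟩]
    _ ≤ supDist f₁ f₂ + supDist g₂ g₃ :=
      add_le_add (dist_le_supDist hf₁.1 hf₂.1 hp) (dist_le_supDist hg₂.1 hg₃.1 (φ _).2)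

lemma jdist_triangle (h₁ : IsJordanDomain D₁) (h₂ : IsJordanDomain D₂)
    (h₃ : IsJordanDomain D₃) : jdist D₁ D₃ ≤ jdist D₁ D₂ + jdist D₂ D₃ := by
  rw [← sub_le_iff_le_add]
  refine le_csInf (jdistSet_nonempty h₁ h₂) ?_
  rintro _ ⟨f₁, f₂, hf₁, hf₂, rfl⟩
  rw [sub_le_comm]
  refine le_csInf (jdistSet_nonempty h₂ h₃) ?_
  rintro _ ⟨g₂, g₃, hg₂, hg₃, rfl⟩
  rw [sub_le_iff_le_add']
  exact jdist_le_supDist_add_supDist hf₁ hf₂ hg₂ hg₃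

lemma subset_of_jdist_eq_zero (h₁ : IsJordanDomain D₁) (h₂ : IsJordanDomain D₂)
    (h : jdist D₁ D₂ = 0) : D₁ ⊆ D₂ := by
  obtain ⟨g, hg⟩ := h₂
  intro x hx
  rw [← hg.isCompact.isClosed.closure_eq, Metric.mem_closure_iff]
  intro ε hε
  obtain ⟨_, ⟨f₁, f₂, hf₁, hf₂, rfl⟩, hlt⟩ :=
    exists_lt_of_csInf_lt (jdistSet_nonempty h₁ ⟨g, hg⟩) (h.symm ▸ hε : jdist D₁ D₂ < ε)
  obtain ⟨p, hp, rfl⟩ := hf₁.2.2.symm ▸ hx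
  exact ⟨f₂ p, hf₂.mem hp, (dist_le_supDist hf₁.1 hf₂.1 hp).trans_lt hlt⟩

end Jdist

end Jordan

/-- `jdist` is a metric on the collection of Jordan domains in a metric space `M`:
it is a well-defined (finite) nonnegative real number, vanishes on the diagonal,
is symmetric, satisfies the triangle inequality, and separates points. -/
theorem jdist_is_metric {M : Type*} [MetricSpace M]
    (D D₁ D₂ D₃ : Set M) (hD : IsJordanDomain D) (h₁ : IsJordanDomain D₁)
    (h₂ : IsJordanDomain D₂) (h₃ : IsJordanDomain D₃) :
    (jdistSet D₁ D₂).Nonempty ∧ BddBelow (jdistSet D₁ D₂) ∧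
    0 ≤ jdist D₁ D₂ ∧
    jdist D D = 0 ∧
    jdist D₁ D₂ = jdist D₂ D₁ ∧
    jdist D₁ D₃ ≤ jdist D₁ D₂ + jdist D₂ D₃ ∧
    (jdist D₁ D₂ = 0 → D₁ = D₂) :=
  ⟨jdistSet_nonempty h₁ h₂, jdistSet_bddBelow D₁ D₂, jdist_nonneg D₁ D₂, jdist_self hD,
    jdist_comm D₁ D₂, jdist_triangle h₁ h₂ h₃, fun h =>
    (subset_of_jdist_eq_zero h₁ h₂ h).antisymm
      (subset_of_jdist_eq_zero h₂ h₁ (jdist_comm D₁ D₂ ▸ h))⟩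
end
end

section
/- Let G be a group of bijections of ℝ² = EuclideanSpace ℝ (Fin 2) (closed under composition and inverses) such that every g ∈ G is a similarity, i.e., there exists r > 0 with dist(g(x), g(y)) = r · dist(x, y) for all x, y ∈ ℝ². Suppose that for every compact set K ⊆ ℝ² and every point x₁ ∈ ℝ², the set {g(x₁) : g ∈ G and (g '' K) ∩ K ≠ ∅} is bounded. Then every g ∈ G is an isometry: dist(g(x), g(y)) = dist(x, y) for all x, y ∈ ℝ². -/
/-!
A similarity of ratio `r < 1` of a complete space is a contraction, hence has a fixed point `p`.
The powers of its inverse fix `p` and push any other point `x` to distance `r⁻ⁿ * dist x p`,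
which is unbounded; properness with `K = {p}` forbids this. So every ratio occurring in `G` is
at least `1`, and applying this to `g` and `g⁻¹` forces the ratio `1`.
-/

noncomputable section

open Function Metric

theorem Equiv.Perm.pow_mem_of_trans_mem {α : Type*} {G : Set (Equiv.Perm α)}
    (hcomp : ∀ g ∈ G, ∀ h ∈ G, g.trans h ∈ G) (hinv : ∀ g ∈ G, g.symm ∈ G)
    {g : Equiv.Perm α} (hg : g ∈ G) : ∀ n : ℕ, g ^ n ∈ G
  | 0 => by simpa [Equiv.Perm.one_def] using hcomp g hg _ (hinv g hg)
  | n + 1 => by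
    rw [pow_succ, Equiv.Perm.mul_def]
    exact hcomp g hg _ (pow_mem_of_trans_mem hcomp hinv hg n)

variable {X : Type*} [MetricSpace X]

def IsSimilarity (r : ℝ) (f : X → X) : Prop :=
  ∀ x y, dist (f x) (f y) = r * dist x y

namespace IsSimilarity

variable {r s : ℝ} {f g : X → X}

theorem comp (hf : IsSimilarity r f) (hg : IsSimilarity s g) : IsSimilarity (r * s) (f ∘ g) :=
  fun x y => by rw [comp_apply, comp_apply, hf, hg, mul_assoc]

theorem perm_pow {e : Equiv.Perm X} (he : IsSimilarity r e) :
    ∀ n : ℕ, IsSimilarity (r ^ n) ⇑(e ^ n)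
  | 0 => fun x y => by simp
  | n + 1 => by
    rw [pow_succ, pow_succ, Equiv.Perm.coe_mul]
    exact (perm_pow he n).comp he

theorem equiv_symm {e : X ≃ X} (he : IsSimilarity r e) (hr : r ≠ 0) :
    IsSimilarity r⁻¹ e.symm :=
  fun x y => by rw [eq_inv_mul_iff_mul_eq₀ hr, ← he, e.apply_symm_apply, e.apply_symm_apply]

theorem contractingWith (hf : IsSimilarity r f) (hr₀ : 0 ≤ r) (hr₁ : r < 1) :
    ContractingWith r.toNNReal f :=
  ⟨Real.toNNReal_lt_one.mpr hr₁,
    LipschitzWith.of_dist_le_mul fun x y => by rw [hf, Real.coe_toNNReal r hr₀]⟩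

end IsSimilarity

theorem IsSimilarity.one_le_of_isBounded_stabilizer_orbits [CompleteSpace X] [Nontrivial X]
    {G : Set (Equiv.Perm X)}
    (hcomp : ∀ g ∈ G, ∀ h ∈ G, g.trans h ∈ G) (hinv : ∀ g ∈ G, g.symm ∈ G)
    (hstab : ∀ p x : X, Bornology.IsBounded {y | ∃ g ∈ G, g p = p ∧ y = g x})
    {g : Equiv.Perm X} (hg : g ∈ G) {r : ℝ} (hr : 0 < r) (hsim : IsSimilarity r g) :
    1 ≤ r := by
  by_contra! hr₁
  set p := ContractingWith.fixedPoint g (hsim.contractingWith hr.le hr₁)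
  have hp : g.symm p = p := g.symm_apply_eq.mpr (ContractingWith.fixedPoint_isFixedPt _).symm
  obtain ⟨x, hx⟩ := exists_ne p
  obtain ⟨R, hR⟩ := (isBounded_iff_subset_closedBall p).mp (hstab p x)
  have hbound (n : ℕ) : r⁻¹ ^ n * dist x p ≤ R := by
    have hfix : (g.symm ^ n) p = p := Equiv.Perm.pow_apply_eq_self_of_apply_eq_self hp n
    have hmem := hR ⟨_, Equiv.Perm.pow_mem_of_trans_mem hcomp hinv (hinv g hg) n, hfix, rfl⟩
    rwa [mem_closedBall, ← hfix, (hsim.equiv_symm hr.ne').perm_pow n] at hmem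
  obtain ⟨n, hn⟩ := pow_unbounded_of_one_lt (R / dist x p) ((one_lt_inv₀ hr).mpr hr₁)
  rw [div_lt_iff₀ (dist_pos.mpr hx)] at hn
  linarith [hbound n]

/-- A group of similarities of the plane acting properly consists of isometries. -/
theorem proper_similarity_group_is_isometric
    (G : Set (Plane ≃ Plane))
    (hcomp : ∀ g ∈ G, ∀ h ∈ G, g.trans h ∈ G)
    (hinv : ∀ g ∈ G, g.symm ∈ G)
    (hsim : ∀ g ∈ G, ∃ r > (0:ℝ), ∀ x y, dist (g x) (g y) = r * dist x y)
    (hproper : ∀ K : Set Plane, IsCompact K → ∀ x₁ : Plane,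
      Bornology.IsBounded {p : Plane | ∃ g ∈ G, (⇑g '' K ∩ K).Nonempty ∧ p = g x₁}) :
    ∀ g ∈ G, ∀ x y, dist (g x) (g y) = dist x y := by
  have hstab (p x : Plane) : Bornology.IsBounded {y | ∃ g ∈ G, g p = p ∧ y = g x} :=
    (hproper {p} isCompact_singleton x).subset fun y ⟨g, hg, hgp, hy⟩ =>
      ⟨g, hg, ⟨p, ⟨p, rfl, hgp⟩, rfl⟩, hy⟩
  intro g hg x y
  obtain ⟨r, hr, hgr⟩ := hsim g hg
  have hr₁ : 1 ≤ r :=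
    IsSimilarity.one_le_of_isBounded_stabilizer_orbits hcomp hinv hstab hg hr hgr
  have hr₁' : 1 ≤ r⁻¹ :=
    IsSimilarity.one_le_of_isBounded_stabilizer_orbits hcomp hinv hstab (hinv g hg)
      (inv_pos.mpr hr) (IsSimilarity.equiv_symm hgr hr.ne')
  rw [hgr, le_antisymm ((one_le_inv₀ hr).mp hr₁') hr₁, one_mul]
end
end

section
/- Let K be a nonempty compact subset of ℝ² = EuclideanSpace ℝ (Fin 2), and let R := sInf {s : ℝ | 0 ≤ s ∧ ∃ x, K ⊆ Metric.closedBall x s} be the circumradius of K. Then: (i) there exists x₀ ∈ ℝ² with K ⊆ Metric.closedBall x₀ R (the infimum is attained); (ii) this x₀ is unique: if K ⊆ Metric.closedBall x R and K ⊆ Metric.closedBall y R then x = y. That is, every nonempty compact subset of the Euclidean plane has a unique smallest circumscribing closed ball. -/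
/-
Minimising the distance to the farthest point of `K`, a 1-Lipschitz and coercive function, gives a
circumcenter. Uniqueness comes from Apollonius' theorem: if `K` lies in the balls of radius `R`
about `x` and `y`, it lies in the ball of radius `√(R² - (dist x y / 2)²)` about their midpoint,
so minimality of `R` forces `x = y`.
-/

noncomputable section

open Filter Metric

section MetricSpace

variable {X : Type*} [PseudoMetricSpace X] {K : Set X} {x : X} {s : ℝ}

def farthestDist (K : Set X) (x : X) : ℝ := ⨆ p : K, dist x p

lemma farthestDist_nonneg : 0 ≤ farthestDist K x :=
  Real.iSup_nonneg fun _ => dist_nonneg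

lemma dist_le_farthestDist (hK : Bornology.IsBounded K) {p : X} (hp : p ∈ K) :
    dist x p ≤ farthestDist K x := by
  obtain ⟨r, hr⟩ := hK.subset_closedBall x
  exact le_ciSup (f := fun p : K => dist x p)
    ⟨r, by rintro _ ⟨q, rfl⟩; exact mem_closedBall'.1 (hr q.2)⟩ ⟨p, hp⟩

lemma subset_closedBall_farthestDist (hK : Bornology.IsBounded K) :
    K ⊆ closedBall x (farthestDist K x) :=
  fun _ hp => mem_closedBall'.2 (dist_le_farthestDist hK hp)

lemma farthestDist_le (hs : 0 ≤ s) (h : K ⊆ closedBall x s) : farthestDist K x ≤ s :=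
  Real.iSup_le (fun p => mem_closedBall'.1 (h p.2)) hs

lemma lipschitzWith_farthestDist (hK : Bornology.IsBounded K) :
    LipschitzWith 1 (farthestDist K) :=
  LipschitzWith.of_le_add fun x y =>
    Real.iSup_le (fun p => by linarith [dist_triangle x y p, dist_le_farthestDist (x := y) hK p.2])
      (add_nonneg farthestDist_nonneg dist_nonneg)

lemma exists_forall_farthestDist_le [ProperSpace X] (hne : K.Nonempty)
    (hK : Bornology.IsBounded K) : ∃ x₀, ∀ x, farthestDist K x₀ ≤ farthestDist K x := by
  obtain ⟨p, hp⟩ := hne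
  have : Nonempty X := ⟨p⟩
  refine (lipschitzWith_farthestDist hK).continuous.exists_forall_le ?_
  exact tendsto_atTop_mono (fun x => dist_le_farthestDist hK hp)
    (tendsto_dist_right_cocompact_atTop p)

def circumradius (K : Set X) : ℝ := sInf {s : ℝ | 0 ≤ s ∧ ∃ x, K ⊆ closedBall x s}

lemma circumradius_nonneg : 0 ≤ circumradius K :=
  Real.sInf_nonneg fun _ hs => hs.1

lemma circumradius_le (hne : K.Nonempty) (h : K ⊆ closedBall x s) : circumradius K ≤ s := by
  obtain ⟨p, hp⟩ := hne
  exact csInf_le ⟨0, fun _ hs => hs.1⟩ ⟨dist_nonneg.trans (mem_closedBall.1 (h hp)), x, h⟩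

lemma exists_subset_closedBall_circumradius [ProperSpace X] (hne : K.Nonempty)
    (hK : Bornology.IsBounded K) : ∃ x₀, K ⊆ closedBall x₀ (circumradius K) := by
  obtain ⟨x₀, hx₀⟩ := exists_forall_farthestDist_le hne hK
  have hle : farthestDist K x₀ ≤ circumradius K :=
    le_csInf ⟨_, farthestDist_nonneg, x₀, subset_closedBall_farthestDist hK⟩
      fun _ ⟨hs, x, hx⟩ => (hx₀ x).trans (farthestDist_le hs hx)
  exact ⟨x₀, (subset_closedBall_farthestDist hK).trans (closedBall_subset_closedBall hle)⟩

end MetricSpace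

lemma dist_midpoint_sq_le {V P : Type*} [NormedAddCommGroup V] [InnerProductSpace ℝ V]
    [MetricSpace P] [NormedAddTorsor V P] {p x y : P} {r : ℝ} (hx : dist p x ≤ r)
    (hy : dist p y ≤ r) :
    dist p (midpoint ℝ x y) ^ 2 ≤ r ^ 2 - (dist x y / 2) ^ 2 := by
  have := EuclideanGeometry.dist_sq_add_dist_sq_eq_two_mul_dist_midpoint_sq_add_half_dist_sq p x y
  nlinarith [dist_nonneg (x := p) (y := x), dist_nonneg (x := p) (y := y)]

lemma eq_of_subset_closedBall_circumradius {V P : Type*} [NormedAddCommGroup V]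
    [InnerProductSpace ℝ V] [MetricSpace P] [NormedAddTorsor V P] {K : Set P} (hne : K.Nonempty)
    {x y : P}
    (hx : K ⊆ closedBall x (circumradius K)) (hy : K ⊆ closedBall y (circumradius K)) :
    x = y := by
  set R := circumradius K
  have hmid : ∀ p ∈ K, dist p (midpoint ℝ x y) ^ 2 ≤ R ^ 2 - (dist x y / 2) ^ 2 :=
    fun p hp => dist_midpoint_sq_le (hx hp) (hy hp)
  have hR : R ≤ √(R ^ 2 - (dist x y / 2) ^ 2) :=
    circumradius_le hne fun p hp => mem_closedBall.2 (Real.le_sqrt_of_sq_le (hmid p hp))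
  obtain ⟨p, hp⟩ := hne
  have hsq : R ^ 2 ≤ R ^ 2 - (dist x y / 2) ^ 2 :=
    (Real.le_sqrt circumradius_nonneg ((sq_nonneg _).trans (hmid p hp))).1 hR
  exact dist_le_zero.1 (by nlinarith [dist_nonneg (x := x) (y := y)])

/-- Every nonempty compact subset of the Euclidean plane has a unique smallest
circumscribing closed ball. -/
theorem exists_unique_circumcenter
    (K : Set Plane) (hne : K.Nonempty) (hK : IsCompact K)
    (R : ℝ) (hR : R = sInf {s : ℝ | 0 ≤ s ∧ ∃ x : Plane, K ⊆ Metric.closedBall x s}) :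
    (∃ x₀ : Plane, K ⊆ Metric.closedBall x₀ R) ∧
    (∀ x y : Plane, K ⊆ Metric.closedBall x R → K ⊆ Metric.closedBall y R → x = y) := by
  subst hR
  exact ⟨exists_subset_closedBall_circumradius hne hK.isBounded,
    fun _ _ => eq_of_subset_closedBall_circumradius hne⟩
end
end

section
/- Let K be a nonempty compact subset of ℝ² = EuclideanSpace ℝ (Fin 2), let R be its circumradius and x₀ its circumcenter, i.e., K ⊆ Metric.closedBall x₀ R and R ≤ s whenever K ⊆ Metric.closedBall y s. Let r > 0 and let K_r := {a + b : a ∈ K, b ∈ Metric.closedBall 0 r} be the Minkowski sum of K with the closed ball of radius r. Then K_r ⊆ Metric.closedBall x₀ (R + r); moreover R + r is the circumradius of K_r (if K_r ⊆ Metric.closedBall y s then R + r ≤ s), and x₀ is the circumcenter of K_r (if K_r ⊆ Metric.closedBall y (R + r) then y = x₀). In other words, the smallest circumscribing ball of K + rB² is concentric with that of K. -/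
/-!
A ball of radius `s` contains `K + rB²` exactly when the concentric ball of radius `s - r`
contains `K`, so the balls circumscribing `K + rB²` are those circumscribing `K`, enlarged by `r`.
The circumcenter is unique because two balls of radius `R` whose centers are `d > 0` apart meet
inside the ball of radius `√(R² - d²/4) < R` around the midpoint of the centers.
-/

noncomputable section

open Metric Pointwise

section NormedSpace

variable {E : Type*} [NormedAddCommGroup E] [NormedSpace ℝ E] [Nontrivial E]

theorem exists_norm_eq_and_sameRay (v : E) {r : ℝ} (hr : 0 ≤ r) :
    ∃ b : E, ‖b‖ = r ∧ SameRay ℝ v b := by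
  rcases eq_or_ne v 0 with rfl | hv
  · obtain ⟨b, hb⟩ := exists_norm_eq E hr
    exact ⟨b, hb, .zero_left b⟩
  · refine ⟨(r / ‖v‖) • v, ?_, SameRay.sameRay_nonneg_smul_right v (by positivity)⟩
    rw [norm_smul, Real.norm_of_nonneg (by positivity), div_mul_cancel₀ _ (norm_ne_zero_iff.2 hv)]

theorem closedBall_subset_closedBall_iff {x y : E} {r s : ℝ} (hr : 0 ≤ r) :
    closedBall x r ⊆ closedBall y s ↔ r + dist x y ≤ s := by
  refine ⟨fun h => ?_, closedBall_subset_closedBall'⟩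
  -- the point of `closedBall x r` farthest from `y`
  obtain ⟨b, hb, hray⟩ := exists_norm_eq_and_sameRay (x - y) hr
  have hfar := h (show x + b ∈ closedBall x r by simp [hb])
  rw [mem_closedBall, dist_eq_norm, add_sub_right_comm, hray.norm_add, hb, ← dist_eq_norm] at hfar
  linarith

theorem add_closedBall_zero_subset_closedBall_iff {K : Set E} {y : E} {r s : ℝ} (hr : 0 ≤ r) :
    K + closedBall 0 r ⊆ closedBall y s ↔ K ⊆ closedBall y (s - r) := by
  rw [← Set.iUnion_add_left_image, Set.iUnion₂_subset_iff]
  simp only [← Set.singleton_add, singleton_add_closedBall_zero,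
    closedBall_subset_closedBall_iff hr, Set.subset_def, mem_closedBall, le_sub_iff_add_le']

end NormedSpace

theorem closedBall_inter_closedBall_subset_closedBall_midpoint {V P : Type*}
    [NormedAddCommGroup V] [InnerProductSpace ℝ V] [MetricSpace P] [NormedAddTorsor V P]
    (x y : P) (R : ℝ) :
    closedBall x R ∩ closedBall y R ⊆
      closedBall (midpoint ℝ x y) (√(R ^ 2 - (dist x y / 2) ^ 2)) := by
  rintro a ⟨hx, hy⟩
  rw [mem_closedBall] at hx hy ⊢
  apply Real.le_sqrt_of_sq_le
  have := EuclideanGeometry.dist_sq_add_dist_sq_eq_two_mul_dist_midpoint_sq_add_half_dist_sq a x y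
  nlinarith [dist_nonneg (x := a) (y := x), dist_nonneg (x := a) (y := y)]

theorem eq_of_subset_closedBall_of_forall_le {V P : Type*} [NormedAddCommGroup V]
    [InnerProductSpace ℝ V] [MetricSpace P] [NormedAddTorsor V P]
    {K : Set P} (hK : K.Nonempty) {x y : P} {R : ℝ}
    (hx : K ⊆ closedBall x R) (hy : K ⊆ closedBall y R)
    (hmin : ∀ z s, K ⊆ closedBall z s → R ≤ s) : y = x := by
  obtain ⟨a, ha⟩ := hK
  have hax := mem_closedBall.1 (hx ha)
  have hay := mem_closedBall.1 (hy ha)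
  have hR : 0 ≤ R := dist_nonneg.trans hax
  have hd : dist x y ≤ 2 * R := by linarith [dist_triangle_left x y a]
  have hle := hmin _ _ ((Set.subset_inter hx hy).trans
    (closedBall_inter_closedBall_subset_closedBall_midpoint x y R))
  rw [Real.le_sqrt hR (by nlinarith [dist_nonneg (x := x) (y := y)])] at hle
  have : dist x y = 0 := by nlinarith
  exact (dist_eq_zero.1 this).symm

theorem circumcenter_of_minkowski_sum_with_ball_general
    (K : Set Plane) (hne : K.Nonempty)
    (R : ℝ) (x₀ : Plane)
    (hsub : K ⊆ Metric.closedBall x₀ R)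
    (hmin : ∀ (y : Plane) (s : ℝ), K ⊆ Metric.closedBall y s → R ≤ s)
    (r : ℝ) (hr : 0 < r)
    (Kr : Set Plane)
    (hKr : Kr = {p : Plane | ∃ a ∈ K, ∃ b ∈ Metric.closedBall (0 : Plane) r, p = a + b}) :
    Kr ⊆ Metric.closedBall x₀ (R + r) ∧
    (∀ (y : Plane) (s : ℝ), Kr ⊆ Metric.closedBall y s → R + r ≤ s) ∧
    (∀ y : Plane, Kr ⊆ Metric.closedBall y (R + r) → y = x₀) := by
  have hKr_add : Kr = K + closedBall 0 r := by
    rw [hKr]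
    ext p
    simp [Set.mem_add, eq_comm]
  have hsub_iff (y : Plane) (s : ℝ) : Kr ⊆ closedBall y s ↔ K ⊆ closedBall y (s - r) :=
    hKr_add ▸ add_closedBall_zero_subset_closedBall_iff hr.le
  refine ⟨(hsub_iff x₀ _).2 (by simpa using hsub), fun y s h => ?_, fun y h => ?_⟩
  · linarith [hmin y _ ((hsub_iff y s).1 h)]
  · exact eq_of_subset_closedBall_of_forall_le hne hsub (by simpa using (hsub_iff y _).1 h) hmin

/-- The smallest circumscribing ball of the Minkowski sum `K + rB²` is concentric with
that of `K`, and its radius is `R + r`. -/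
theorem circumcenter_of_minkowski_sum_with_ball
    (K : Set Plane) (hne : K.Nonempty) (hK : IsCompact K)
    (R : ℝ) (x₀ : Plane)
    (hsub : K ⊆ Metric.closedBall x₀ R)
    (hmin : ∀ (y : Plane) (s : ℝ), K ⊆ Metric.closedBall y s → R ≤ s)
    (r : ℝ) (hr : 0 < r)
    (Kr : Set Plane)
    (hKr : Kr = {p : Plane | ∃ a ∈ K, ∃ b ∈ Metric.closedBall (0 : Plane) r, p = a + b}) :
    Kr ⊆ Metric.closedBall x₀ (R + r) ∧
    (∀ (y : Plane) (s : ℝ), Kr ⊆ Metric.closedBall y s → R + r ≤ s) ∧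
    (∀ y : Plane, Kr ⊆ Metric.closedBall y (R + r) → y = x₀) :=
  circumcenter_of_minkowski_sum_with_ball_general K hne R x₀ hsub hmin r hr Kr hKr
end
end

section
/- Let K be a nonempty compact convex subset of ℝ² = EuclideanSpace ℝ (Fin 2), let r > 0, and let D := {a + b : a ∈ K, b ∈ Metric.closedBall 0 r} be the Minkowski sum of K with the closed ball of radius r. Then, with μ the Lebesgue (volume) measure on ℝ², one has 0 < μ(D) < ∞, and the center of mass of D, namely (μ(D))⁻¹ • ∫_{x ∈ D} x ∂μ, lies in K. -/
open MeasureTheory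

noncomputable section

open RealInnerProductSpace Pointwise Metric

/-!
Suppose the centroid `c` of `D = K + closedBall 0 r` is not in `K`, and separate it from `K` by a
hyperplane `⟪w, x⟫ = s`, with `K` on the side `⟪w, x⟫ ≤ s`. Let `σ` be the reflection in this
hyperplane and `g x = ⟪w, x⟫ - s`. For `a` on the side of `K` and `x` on the other side,
`dist (σ x) a ≤ dist x a`, so `σ` maps the part of `D` beyond the hyperplane back into `D`.
As `σ` preserves volume and `g ∘ σ = -g`, this forces `∫_D g ≤ 0`, that is `⟪w, c⟫ ≤ s`,
a contradiction.
-/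

section HyperplaneReflection

variable {E : Type*} [NormedAddCommGroup E] [InnerProductSpace ℝ E]

/-- The reflection in the hyperplane `⟪w, x⟫ = s` when `‖w‖ = 1`. -/
def hyperplaneReflection (w : E) (s : ℝ) (x : E) : E := x + (2 * (s - ⟪w, x⟫)) • w

variable {w : E}

theorem inner_hyperplaneReflection (hw : ‖w‖ = 1) (s : ℝ) (x : E) :
    ⟪w, hyperplaneReflection w s x⟫ = 2 * s - ⟪w, x⟫ := by
  rw [hyperplaneReflection, inner_add_right, real_inner_smul_right, real_inner_self_eq_norm_sq,
    hw]
  ring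

theorem hyperplaneReflection_involutive (hw : ‖w‖ = 1) (s : ℝ) :
    Function.Involutive (hyperplaneReflection w s) := by
  intro x
  rw [hyperplaneReflection, inner_hyperplaneReflection hw, hyperplaneReflection]
  module

theorem hyperplaneReflection_eq (hw : ‖w‖ = 1) (s : ℝ) :
    hyperplaneReflection w s = (· + (2 * s) • w) ∘ (ℝ ∙ w)ᗮ.reflection := by
  ext1 x
  rw [Function.comp_apply, Submodule.reflection_orthogonal_apply,
    Submodule.reflection_singleton_apply, hw, hyperplaneReflection]
  module

theorem measurePreserving_hyperplaneReflection [FiniteDimensional ℝ E] [MeasurableSpace E]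
    [BorelSpace E] (hw : ‖w‖ = 1) (s : ℝ) : MeasurePreserving (hyperplaneReflection w s) := by
  rw [hyperplaneReflection_eq hw]
  exact (measurePreserving_add_right volume _).comp (LinearIsometryEquiv.measurePreserving _)

theorem dist_hyperplaneReflection_sq (hw : ‖w‖ = 1) (s : ℝ) (x a : E) :
    dist (hyperplaneReflection w s x) a ^ 2
      = dist x a ^ 2 + 4 * (⟪w, x⟫ - s) * (⟪w, a⟫ - s) := by
  have hxa : hyperplaneReflection w s x - a = (x - a) - (2 * (⟪w, x⟫ - s)) • w := by
    rw [hyperplaneReflection]; module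
  rw [dist_eq_norm, dist_eq_norm, hxa, norm_sub_sq_real, real_inner_smul_right, norm_smul, hw,
    inner_sub_left, real_inner_comm w x, real_inner_comm w a, Real.norm_eq_abs, mul_one, sq_abs]
  ring

theorem hyperplaneReflection_mem_add_closedBall (hw : ‖w‖ = 1) {s : ℝ} {K : Set E}
    (hK : ∀ a ∈ K, ⟪w, a⟫ ≤ s) {r : ℝ} {x : E} (hx : x ∈ K + closedBall 0 r) (hxs : s ≤ ⟪w, x⟫) :
    hyperplaneReflection w s x ∈ K + closedBall 0 r := by
  obtain ⟨a, ha, b, hb, rfl⟩ := Set.mem_add.1 hx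
  have hdist : dist (hyperplaneReflection w s (a + b)) a ≤ dist (a + b) a := by
    refine (sq_le_sq₀ dist_nonneg dist_nonneg).1 ?_
    rw [dist_hyperplaneReflection_sq hw]
    nlinarith [hK a ha]
  refine Set.mem_add.2 ⟨a, ha, _, ?_, add_sub_cancel a _⟩
  rw [mem_closedBall_zero_iff, ← dist_eq_norm]
  exact hdist.trans ((dist_self_add_left b a).trans_le (mem_closedBall_zero_iff.1 hb))

end HyperplaneReflection

section Involution

variable {α : Type*} [MeasurableSpace α] {μ : Measure α} {σ : α → α}

theorem integral_nonpos_of_add_comp_nonpos (hσ : MeasurePreserving σ μ μ)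
    (hσ' : MeasurableEmbedding σ) {f : α → ℝ} (hf : Integrable f μ)
    (h : ∀ x, f x + f (σ x) ≤ 0) : ∫ x, f x ∂μ ≤ 0 := by
  have hfσ : Integrable (fun x => f (σ x)) μ := (hσ.integrable_comp_emb hσ').2 hf
  have hsum : ∫ x, (f x + f (σ x)) ∂μ = 2 * ∫ x, f x ∂μ := by
    rw [integral_add hf hfσ, hσ.integral_comp hσ']
    ring
  linarith [integral_nonpos (μ := μ) h]

theorem setIntegral_nonpos_of_involutive (hσ : MeasurePreserving σ μ μ)
    (hinv : Function.Involutive σ) {g : α → ℝ} (hg : ∀ x, g (σ x) = -g x) {D : Set α}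
    (hD : MeasurableSet D) (hgD : IntegrableOn g D μ) (hmaps : ∀ x ∈ D, 0 < g x → σ x ∈ D) :
    ∫ x in D, g x ∂μ ≤ 0 := by
  rw [← integral_indicator hD]
  refine integral_nonpos_of_add_comp_nonpos hσ
    (MeasurableEquiv.ofInvolutive σ hinv hσ.measurable).measurableEmbedding
    ((integrable_indicator_iff hD).2 hgD) fun x => ?_
  by_cases hx : x ∈ D <;> by_cases hσx : σ x ∈ D
  · simp [hx, hσx, hg]
  · simp only [Set.indicator_of_mem hx, Set.indicator_of_notMem hσx, add_zero]
    exact not_lt.1 fun hpos => hσx (hmaps x hx hpos)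
  · simp only [Set.indicator_of_notMem hx, Set.indicator_of_mem hσx, zero_add]
    exact not_lt.1 fun hpos => hx (hinv x ▸ hmaps (σ x) hσx hpos)
  · simp [hx, hσx]

end Involution

section Centroid

variable {E : Type*} [NormedAddCommGroup E] [InnerProductSpace ℝ E]

theorem setIntegral_inner_sub_nonpos_of_add_closedBall [FiniteDimensional ℝ E] [MeasurableSpace E]
    [BorelSpace E] {w : E} (hw : ‖w‖ = 1) {s : ℝ} {K : Set E} (hK : IsCompact K)
    (hKs : ∀ a ∈ K, ⟪w, a⟫ ≤ s) (r : ℝ) :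
    ∫ x in K + closedBall 0 r, (⟪w, x⟫ - s) ≤ 0 := by
  have hD : IsCompact (K + closedBall (0 : E) r) := hK.add (isCompact_closedBall 0 r)
  have hg : Continuous fun x : E => ⟪w, x⟫ - s := by fun_prop
  refine setIntegral_nonpos_of_involutive (measurePreserving_hyperplaneReflection hw s)
    (hyperplaneReflection_involutive hw s) (fun x => ?_) hD.isClosed.measurableSet
    (hg.continuousOn.integrableOn_compact hD)
    fun x hx hxs => hyperplaneReflection_mem_add_closedBall hw hKs hx (sub_pos.1 hxs).le
  rw [inner_hyperplaneReflection hw]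
  ring

theorem inner_centroid_le [CompleteSpace E] [MeasurableSpace E] {μ : Measure E} {D : Set E}
    (hD₀ : μ D ≠ 0) (hD : μ D ≠ ⊤) (hint : IntegrableOn (fun x => x) D μ) {w : E} {s : ℝ}
    (h : ∫ x in D, (⟪w, x⟫ - s) ∂μ ≤ 0) :
    ⟪w, (μ D).toReal⁻¹ • ∫ x in D, x ∂μ⟫ ≤ s := by
  have hvol : 0 < (μ D).toReal := ENNReal.toReal_pos hD₀ hD
  rw [integral_sub (hint.const_inner w) (integrableOn_const (C := s) hD), integral_inner hint w,
    setIntegral_const, measureReal_def, smul_eq_mul] at h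
  rw [real_inner_smul_right, inv_mul_le_iff₀ hvol]
  linarith

theorem exists_unit_inner_le_lt_of_notMem [CompleteSpace E] {K : Set E} (hne : K.Nonempty)
    (hconv : Convex ℝ K) (hK : IsClosed K) {c : E} (hc : c ∉ K) :
    ∃ w : E, ‖w‖ = 1 ∧ ∃ s, (∀ a ∈ K, ⟪w, a⟫ ≤ s) ∧ s < ⟪w, c⟫ := by
  obtain ⟨f, u, hfK, hfc⟩ := geometric_hahn_banach_closed_point hconv hK hc
  set v := (InnerProductSpace.toDual ℝ E).symm f
  have hv : ∀ x, ⟪v, x⟫ = f x := fun x => InnerProductSpace.toDual_symm_apply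
  obtain ⟨a, ha⟩ := hne
  have hv₀ : v ≠ 0 := by
    intro hv₀
    have := (hfK a ha).trans hfc
    simp [← hv, hv₀] at this
  refine ⟨‖v‖⁻¹ • v, norm_smul_inv_norm hv₀, ‖v‖⁻¹ * u, fun a ha => ?_, ?_⟩
  · rw [real_inner_smul_left, hv]
    exact mul_le_mul_of_nonneg_left (hfK a ha).le (by positivity)
  · rw [real_inner_smul_left, hv]
    exact mul_lt_mul_of_pos_left hfc (by positivity)

end Centroid

/-- For a nonempty compact convex `K ⊆ ℝ²` and `r > 0`, the Minkowski sum
`D = K + rB²` has finite positive area, and the center of mass of `D` lies in `K`. -/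
theorem center_of_mass_of_minkowski_sum_mem
    (K : Set Plane) (hne : K.Nonempty) (hK : IsCompact K) (hconv : Convex ℝ K)
    (r : ℝ) (hr : 0 < r)
    (D : Set Plane)
    (hD : D = {p : Plane | ∃ a ∈ K, ∃ b ∈ Metric.closedBall (0 : Plane) r, p = a + b}) :
    0 < volume D ∧ volume D < ⊤ ∧
      (volume D).toReal⁻¹ • (∫ x in D, x ∂volume) ∈ K := by
  replace hD : D = K + closedBall 0 r := by
    ext p
    simp [hD, Set.mem_add, eq_comm]
  subst hD
  have hDc : IsCompact (K + closedBall (0 : Plane) r) := hK.add (isCompact_closedBall 0 r)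
  obtain ⟨a, ha⟩ := hne
  have hpos : 0 < volume (K + closedBall (0 : Plane) r) := by
    refine (measure_closedBall_pos volume a hr).trans_le (measure_mono ?_)
    rw [← singleton_add_closedBall_zero]
    exact Set.add_subset_add_right (Set.singleton_subset_iff.2 ha)
  refine ⟨hpos, hDc.measure_lt_top, ?_⟩
  by_contra hc
  obtain ⟨w, hw, s, hKs, hsc⟩ := exists_unit_inner_le_lt_of_notMem ⟨a, ha⟩ hconv hK.isClosed hc
  exact hsc.not_ge <| inner_centroid_le hpos.ne' hDc.measure_lt_top.ne
    (continuous_id.continuousOn.integrableOn_compact hDc)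
    (setIntegral_inner_sub_nonpos_of_add_closedBall hw hK hKs r)
end
end

section
/- Let γ : ℝ → ℝ² (with ℝ² = EuclideanSpace ℝ (Fin 2)) be a twice continuously differentiable map (ContDiff ℝ 2), periodic with period L > 0 (γ(t + L) = γ(t) for all t), injective on the interval [0, L), and with nonvanishing derivative (deriv γ t ≠ 0 for all t). Let Γ := Set.range γ. Then there exists ε > 0 such that every point p ∈ ℝ² with Metric.infDist p Γ < ε has a unique nearest point on Γ: there exists exactly one q ∈ Γ with dist(p, q) = Metric.infDist p Γ. (That is, a C² embedded closed curve in the plane has positive reach.) -/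
noncomputable section

/-!
If `p` has two nearest points `γ a`, `γ b` on the curve, at distance `d`, then
`‖γ b - γ a‖² = 2 ⟪p - γ a, γ b - γ a⟫`. The first-order condition `p - γ a ⟂ γ' a` and Taylor's
formula bound the right-hand side by `2 d K (b - a)²`, while regularity gives
`‖γ b - γ a‖ ≥ c |b - a|` for parameters near a fixed `t₀`; so `a = b` as soon as `2 d K < c²`.
Parameters that are not close are ruled out by compactness: if points ever closer to the curve
had two distinct nearest points, these would converge to a common point of the curve, and by
injectivity on a period their parameters, shifted by a multiple of `L`, to a common parameter.
-/

open Metric Set Filter Topology Function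
open scoped RealInnerProductSpace

theorem Function.Periodic.exists_int_eq_add_mul_of_injOn {α : Type*} {f : ℝ → α} {L : ℝ}
    (hper : Periodic f L) (hL : 0 < L) (hinj : InjOn f (Ico 0 L)) {x y : ℝ} (h : f x = f y) :
    ∃ k : ℤ, x = y + k * L := by
  have hmod : ∀ z, f (toIcoMod hL 0 z) = f z := fun z => by
    rw [← self_sub_toIcoDiv_zsmul, hper.sub_zsmul_eq]
  obtain ⟨n, hn⟩ := (toIcoMod_eq_toIcoMod hL).mp <|
    hinj (toIcoMod_mem_Ico' hL x) (toIcoMod_mem_Ico' hL y) (by rw [hmod, hmod, h])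
  exact ⟨-n, by rw [zsmul_eq_mul] at hn; push_cast; linarith⟩

section InnerProductSpace

variable {E : Type*} [NormedAddCommGroup E] [InnerProductSpace ℝ E]

theorem inner_deriv_sub_eq_zero_of_forall_dist_le {γ : ℝ → E} {t : ℝ} {p : E}
    (hγ : DifferentiableAt ℝ γ t) (hmin : ∀ s, dist p (γ t) ≤ dist p (γ s)) :
    ⟪deriv γ t, p - γ t⟫ = 0 := by
  have hderiv : HasDerivAt (fun s => ‖p - γ s‖ ^ 2) (2 * ⟪p - γ t, -deriv γ t⟫) t :=
    (hγ.hasDerivAt.const_sub p).norm_sq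
  have hlocmin : IsLocalMin (fun s => ‖p - γ s‖ ^ 2) t := Eventually.of_forall fun s => by
    simpa only [dist_eq_norm] using pow_le_pow_left₀ dist_nonneg (hmin s) 2
  have := hlocmin.hasDerivAt_eq_zero hderiv
  rw [inner_neg_right, real_inner_comm] at this
  linarith

theorem Convex.norm_image_sub_sub_smul_le {γ : ℝ → E} {s : Set ℝ} (hs : Convex ℝ s)
    (hγ : ∀ x ∈ s, DifferentiableAt ℝ γ x) {v : E} {C : ℝ} (hC : ∀ x ∈ s, ‖deriv γ x - v‖ ≤ C)
    {a b : ℝ} (ha : a ∈ s) (hb : b ∈ s) : ‖γ b - γ a - (b - a) • v‖ ≤ C * |b - a| := by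
  have hderiv : ∀ x ∈ s, HasDerivWithinAt (fun y => γ y - y • v) (deriv γ x - v) s x :=
    fun x hx => by
      simpa using ((hγ x hx).hasDerivAt.fun_sub ((hasDerivAt_id x).smul_const v)).hasDerivWithinAt
  calc ‖γ b - γ a - (b - a) • v‖ = ‖(γ b - b • v) - (γ a - a • v)‖ := by
        rw [sub_smul]; congr 1; abel
    _ ≤ C * ‖b - a‖ := hs.norm_image_sub_le_of_norm_hasDerivWithin_le hderiv hC ha hb
    _ = C * |b - a| := by rw [Real.norm_eq_abs]

theorem ContDiff.exists_ball_mul_abs_sub_le_norm_sub {γ : ℝ → E} (hγ : ContDiff ℝ 1 γ) {t₀ : ℝ}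
    (h₀ : deriv γ t₀ ≠ 0) :
    ∃ r > 0, ∀ a ∈ ball t₀ r, ∀ b ∈ ball t₀ r, ‖deriv γ t₀‖ / 2 * |b - a| ≤ ‖γ b - γ a‖ := by
  have hc : 0 < ‖deriv γ t₀‖ / 2 := by positivity
  obtain ⟨r, hr, hball⟩ := Metric.continuousAt_iff.mp
    ((hγ.continuous_deriv le_rfl).continuousAt (x := t₀)) _ hc
  refine ⟨r, hr, fun a ha b hb => ?_⟩
  have hmvt := (convex_ball t₀ r).norm_image_sub_sub_smul_le
    (fun x _ => hγ.differentiable one_ne_zero x)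
    (fun x hx => by rw [← dist_eq_norm]; exact (hball hx).le) ha hb
  have htri := norm_sub_norm_le ((b - a) • deriv γ t₀) (γ b - γ a)
  rw [norm_smul, Real.norm_eq_abs, norm_sub_rev ((b - a) • _)] at htri
  nlinarith [abs_nonneg (b - a)]

theorem ContDiff.exists_ball_norm_sub_sub_smul_deriv_le {γ : ℝ → E} (hγ : ContDiff ℝ 2 γ)
    (t₀ : ℝ) : ∃ r > 0, ∃ K ≥ (0 : ℝ), ∀ a ∈ ball t₀ r, ∀ b ∈ ball t₀ r,
      ‖γ b - γ a - (b - a) • deriv γ a‖ ≤ K * (b - a) ^ 2 := by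
  obtain ⟨K, t, ht, hlip⟩ := (hγ.deriv' (n := 1)).contDiffAt.exists_lipschitzOnWith (x := t₀)
  obtain ⟨r, hr, hrt⟩ := Metric.mem_nhds_iff.mp ht
  refine ⟨r, hr, K, K.2, fun a ha b hb => ?_⟩
  have hsub : uIcc a b ⊆ ball t₀ r := (convex_ball t₀ r).ordConnected.uIcc_subset ha hb
  have hbound : ∀ x ∈ uIcc a b, ‖deriv γ x - deriv γ a‖ ≤ K * |b - a| := fun x hx => by
    calc ‖deriv γ x - deriv γ a‖ ≤ K * ‖x - a‖ :=
          hlip.norm_sub_le (hrt (hsub hx)) (hrt (hsub left_mem_uIcc))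
      _ ≤ K * |b - a| := by gcongr; exact abs_sub_left_of_mem_uIcc hx
  calc ‖γ b - γ a - (b - a) • deriv γ a‖ ≤ K * |b - a| * |b - a| :=
        convex_uIcc a b |>.norm_image_sub_sub_smul_le (fun x _ => hγ.differentiable two_ne_zero x)
          hbound left_mem_uIcc right_mem_uIcc
    _ = K * (b - a) ^ 2 := by rw [mul_assoc, abs_mul_abs_self, sq]

theorem eq_zero_of_norm_sub_eq_norm_of_inner_eq_zero {x Δ v : E} {w c K : ℝ} (hc : 0 ≤ c)
    (hlow : c * |w| ≤ ‖Δ‖) (htaylor : ‖Δ - w • v‖ ≤ K * w ^ 2) (horth : ⟪v, x⟫ = 0)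
    (heq : ‖x - Δ‖ = ‖x‖) (hsmall : 2 * K * ‖x‖ < c ^ 2) : w = 0 := by
  have hsq : ‖Δ‖ ^ 2 = 2 * ⟪x, Δ⟫ := by
    have := norm_sub_sq_real x Δ
    rw [heq] at this
    linarith
  have hinner : ⟪x, Δ⟫ ≤ ‖x‖ * (K * w ^ 2) := calc
    ⟪x, Δ⟫ = ⟪x, Δ - w • v⟫ := by
        rw [inner_sub_right, inner_smul_right, real_inner_comm v x, horth, mul_zero, sub_zero]
    _ ≤ ‖x‖ * ‖Δ - w • v‖ := real_inner_le_norm _ _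
    _ ≤ ‖x‖ * (K * w ^ 2) := by gcongr
  have hlow2 : c ^ 2 * w ^ 2 ≤ ‖Δ‖ ^ 2 := by
    rw [← sq_abs w, ← mul_pow]
    gcongr
  by_contra hw
  have : 0 < w ^ 2 := by positivity
  nlinarith

theorem ContDiff.exists_ball_eq_of_norm_sub_eq {γ : ℝ → E} (hγ : ContDiff ℝ 2 γ) {t₀ : ℝ}
    (h₀ : deriv γ t₀ ≠ 0) :
    ∃ ε > 0, ∀ a ∈ ball t₀ ε, ∀ b ∈ ball t₀ ε, ∀ p : E, ‖p - γ a‖ < ε →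
      ‖p - γ b‖ = ‖p - γ a‖ → ⟪deriv γ a, p - γ a⟫ = 0 → a = b := by
  obtain ⟨r₁, hr₁, hlow⟩ := (hγ.of_le (by norm_num)).exists_ball_mul_abs_sub_le_norm_sub h₀
  obtain ⟨r₂, hr₂, K, hK, htaylor⟩ := hγ.exists_ball_norm_sub_sub_smul_deriv_le t₀
  set c := ‖deriv γ t₀‖ / 2
  have hc : 0 < c := by positivity
  set ε := min (min r₁ r₂) (c ^ 2 / (2 * K + 1))
  have hε₁ : ball t₀ ε ⊆ ball t₀ r₁ := ball_subset_ball ((min_le_left _ _).trans (min_le_left _ _))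
  have hε₂ : ball t₀ ε ⊆ ball t₀ r₂ := ball_subset_ball ((min_le_left _ _).trans (min_le_right _ _))
  refine ⟨ε, by positivity, fun a ha b hb p hp heq horth => ?_⟩
  have hsmall : 2 * K * ‖p - γ a‖ < c ^ 2 := by
    have := (lt_div_iff₀ (by positivity)).mp (hp.trans_le (min_le_right _ _))
    nlinarith [norm_nonneg (p - γ a)]
  have := eq_zero_of_norm_sub_eq_norm_of_inner_eq_zero hc.le (hlow a (hε₁ ha) b (hε₁ hb))
    (htaylor a (hε₂ ha) b (hε₂ hb)) horth (by rwa [sub_sub_sub_cancel_right]) hsmall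
  linarith

theorem exists_eq_of_tendsto_of_dist_eq_infDist {γ : ℝ → E} (hγ : ContDiff ℝ 2 γ) {L : ℝ}
    (hL : 0 < L) (hper : Periodic γ L) (hinj : InjOn γ (Ico 0 L)) (hreg : ∀ t, deriv γ t ≠ 0)
    {p : ℕ → E} {a b : ℕ → ℝ} {t₀ s₀ : ℝ} (ha : Tendsto a atTop (𝓝 t₀))
    (hb : Tendsto b atTop (𝓝 s₀)) (hd : Tendsto (fun n => infDist (p n) (range γ)) atTop (𝓝 0))
    (hda : ∀ n, dist (p n) (γ (a n)) = infDist (p n) (range γ))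
    (hdb : ∀ n, dist (p n) (γ (b n)) = infDist (p n) (range γ)) :
    ∃ n, γ (a n) = γ (b n) := by
  have hda' : ∀ n, dist (γ (a n)) (p n) = infDist (p n) (range γ) := fun n => by
    rw [dist_comm, hda]
  have hp : Tendsto p atTop (𝓝 (γ t₀)) := ((hγ.continuous.tendsto t₀).comp ha).congr_dist
    (by simpa only [comp_apply, hda'] using hd)
  have hγb : Tendsto (γ ∘ b) atTop (𝓝 (γ t₀)) :=
    hp.congr_dist (by simpa only [comp_apply, hdb] using hd)
  obtain ⟨k, hk⟩ := hper.exists_int_eq_add_mul_of_injOn hL hinj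
    (tendsto_nhds_unique hγb ((hγ.continuous.tendsto s₀).comp hb))
  have hB : Tendsto (fun n => b n + k * L) atTop (𝓝 t₀) := hk ▸ hb.add_const _
  obtain ⟨ε, hε, hloc⟩ := hγ.exists_ball_eq_of_norm_sub_eq (hreg t₀)
  obtain ⟨n, han, hBn, hdn⟩ := ((ha.eventually (ball_mem_nhds t₀ hε)).and
    ((hB.eventually (ball_mem_nhds t₀ hε)).and (hd.eventually (gt_mem_nhds hε)))).exists
  have hshift : γ (b n + k * L) = γ (b n) := hper.int_mul k (b n)
  have horth : ⟪deriv γ (a n), p n - γ (a n)⟫ = 0 :=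
    inner_deriv_sub_eq_zero_of_forall_dist_le (hγ.differentiable two_ne_zero _)
      fun s => hda n ▸ infDist_le_dist_of_mem (mem_range_self s)
  have heq := hloc _ han _ hBn (p n) (by rwa [← dist_eq_norm, hda]) (by
    rw [hshift, ← dist_eq_norm, ← dist_eq_norm, hda, hdb]) horth
  exact ⟨n, by rw [heq, hshift]⟩

end InnerProductSpace

theorem Function.Periodic.exists_ne_dist_eq_infDist {α : Type*} [MetricSpace α] {γ : ℝ → α}
    {L : ℝ} (hper : Periodic γ L) (hL : 0 < L) (hγ : Continuous γ) {p : α}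
    (h : ¬∃! q, q ∈ range γ ∧ dist p q = infDist p (range γ)) :
    ∃ a ∈ Icc 0 L, ∃ b ∈ Icc 0 L, γ a ≠ γ b ∧ dist p (γ a) = infDist p (range γ) ∧
      dist p (γ b) = infDist p (range γ) := by
  obtain ⟨q, ⟨s, rfl⟩, hq⟩ :=
    (hper.compact_of_continuous hL.ne' hγ).exists_infDist_eq_dist (range_nonempty γ) p
  obtain ⟨q', ⟨⟨s', rfl⟩, hq'⟩, hne⟩ :
      ∃ q', (q' ∈ range γ ∧ dist p q' = infDist p (range γ)) ∧ q' ≠ γ s := by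
    by_contra! h'
    exact h ⟨γ s, ⟨mem_range_self s, hq.symm⟩, h'⟩
  obtain ⟨a, ha, has⟩ := hper.exists_mem_Ico₀ hL s
  obtain ⟨b, hb, hbs⟩ := hper.exists_mem_Ico₀ hL s'
  exact ⟨a, Ico_subset_Icc_self ha, b, Ico_subset_Icc_self hb, has ▸ hbs ▸ hne.symm,
    has ▸ hq.symm, hbs ▸ hq'⟩

/-- A `C²` embedded closed curve in the plane has positive reach: every point
sufficiently close to the curve has a unique nearest point on it. -/
theorem c2_closed_curve_positive_reach
    (γ : ℝ → Plane) (hγ : ContDiff ℝ 2 γ)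
    (L : ℝ) (hL : 0 < L) (hper : ∀ t, γ (t + L) = γ t)
    (hinj : Set.InjOn γ (Set.Ico 0 L))
    (hreg : ∀ t, deriv γ t ≠ 0) :
    ∃ ε > (0:ℝ), ∀ p : Plane, Metric.infDist p (Set.range γ) < ε →
      ∃! q : Plane, q ∈ Set.range γ ∧ dist p q = Metric.infDist p (Set.range γ) := by
  by_contra! hcon
  choose p hp hnu using fun n : ℕ => hcon (1 / (n + 1)) Nat.one_div_pos_of_nat
  choose a ha b hb hab hda hdb using fun n =>
    Periodic.exists_ne_dist_eq_infDist hper hL hγ.continuous (hnu n)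
  obtain ⟨⟨t₀, s₀⟩, -, φ, hφ, hlim⟩ := (isCompact_Icc.prod isCompact_Icc).tendsto_subseq
    (x := fun n => (a n, b n)) fun n => ⟨ha n, hb n⟩
  have hd : Tendsto (fun n => infDist (p (φ n)) (range γ)) atTop (𝓝 0) :=
    squeeze_zero (fun _ => infDist_nonneg) (fun n => (hp (φ n)).le)
      (tendsto_one_div_add_atTop_nhds_zero_nat.comp hφ.tendsto_atTop)
  obtain ⟨n, hn⟩ := exists_eq_of_tendsto_of_dist_eq_infDist hγ hL hper hinj hreg
    hlim.fst_nhds hlim.snd_nhds hd (fun n => hda (φ n)) (fun n => hdb (φ n))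
  exact hab (φ n) hn
end
end

section
/- Let U := {z : ℂ | 0 < Complex.abs z ∧ Complex.abs z < 1} be the punctured open unit disc. If f : ℂ → ℂ is holomorphic on U (DifferentiableOn ℂ f U) and maps U bijectively onto U (Set.BijOn f U U), then there exists a ∈ ℂ with Complex.abs a = 1 such that f(z) = a * z for all z ∈ U. That is, every conformal automorphism of the punctured unit disc is a rotation about the origin. -/
/-!
Since `f` is bounded, it extends holomorphically across the puncture to `g` on the disc. The
extension is nonconstant, hence open, and maps the disc into the closed disc, hence into the open
disc. An open map that is injective off a point is injective everywhere, so `g 0` is not a value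
`f z` with `z ≠ 0`, i.e. `g 0 = 0`, and `g` is a holomorphic bijection of the disc fixing `0`.
Its inverse is holomorphic as well (continuous by the open mapping theorem, differentiable away
from the isolated critical points of `g` by the inverse function theorem, and across them by
removability), so the Schwarz lemma applied to `g` and to its inverse gives `‖g z‖ = ‖z‖`, and the
equality case of the Schwarz lemma makes `g` a rotation.
-/

open Function Complex Metric Set Filter Topology

section Topology

variable {X Y : Type*} [TopologicalSpace X]

theorem Set.InjOn.not_eventually_eq [∀ x : X, (𝓝[≠] x).NeBot] {g : X → Y} {s : Set X} {z : X}
    (hinj : InjOn g s) (hs : IsOpen s) (hz : z ∈ s) : ¬∀ᶠ w in 𝓝 z, g w = g z := by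
  intro h
  obtain ⟨w, ⟨hgw, hws⟩, hwz⟩ :=
    (((h.and (hs.mem_nhds hz)).filter_mono nhdsWithin_le_nhds).and
      (self_mem_nhdsWithin (s := {z}ᶜ))).exists
  exact hwz (hinj hws hz hgw)

theorem Set.InjOn.of_sdiff_singleton [T2Space X] [TopologicalSpace Y] [∀ y : Y, (𝓝[≠] y).NeBot]
    {g : X → Y} {s : Set X} {a : X} (hs : IsOpen s)
    (hopen : ∀ t ⊆ s, IsOpen t → IsOpen (g '' t)) (hinj : InjOn g (s \ {a})) : InjOn g s := by
  have hne_apply : ∀ x ∈ s, a ∈ s → x ≠ a → g x ≠ g a := by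
    intro x hx ha hxa hgx
    obtain ⟨V, W, hV, hW, haV, hxW, hVW⟩ := t2_separation hxa.symm
    have hnhds : ∀ {t}, IsOpen t → ∀ {y}, y ∈ t → y ∈ s → g '' (t ∩ s) ∈ 𝓝 (g y) :=
      fun ht y hyt hys => (hopen _ inter_subset_right (ht.inter hs)).mem_nhds ⟨y, ⟨hyt, hys⟩, rfl⟩
    have hmem := inter_mem (hnhds hV haV ha) (hgx ▸ hnhds hW hxW hx)
    -- a value near `g a`, other than `g a`, is taken both near `a` and near `x`
    obtain ⟨_, ⟨⟨p, ⟨hpV, hps⟩, rfl⟩, ⟨q, ⟨hqW, hqs⟩, hqp⟩⟩, hpa⟩ :=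
      Filter.nonempty_of_mem (sdiff_mem_nhdsWithin_compl hmem {g a})
    have hpa : p ≠ a := fun h => hpa (h ▸ rfl)
    have hqa : q ≠ a := (hVW.ne_of_mem haV hqW).symm
    exact hVW.ne_of_mem hpV hqW (hinj ⟨hps, hpa⟩ ⟨hqs, hqa⟩ hqp.symm)
  intro x hx y hy hxy
  by_cases hxa : x = a <;> by_cases hya : y = a
  · exact hxa.trans hya.symm
  · exact absurd (hxa ▸ hxy.symm) (hne_apply y hy (hxa ▸ hx) hya)
  · exact absurd (hya ▸ hxy) (hne_apply x hx (hya ▸ hy) hxa)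
  · exact hinj ⟨hx, hxa⟩ ⟨hy, hya⟩ hxy

end Topology

section InverseFunction

variable {g : ℂ → ℂ} {s : Set ℂ}

theorem Set.InjOn.nhds_le_map_nhds (hinj : InjOn g s) (hs : IsOpen s)
    (hg : DifferentiableOn ℂ g s) {z : ℂ} (hz : z ∈ s) : 𝓝 (g z) ≤ map g (𝓝 z) :=
  (hg.analyticAt (hs.mem_nhds hz)).eventually_constant_or_nhds_le_map_nhds.resolve_left
    (hinj.not_eventually_eq hs hz)

theorem Set.InjOn.eventually_deriv_ne_zero (hinj : InjOn g s) (hs : IsOpen s)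
    (hg : DifferentiableOn ℂ g s) {z : ℂ} (hz : z ∈ s) : ∀ᶠ w in 𝓝[≠] z, deriv g w ≠ 0 := by
  refine (hg.analyticAt (hs.mem_nhds hz)).deriv.eventually_eq_zero_or_eventually_ne_zero
    |>.resolve_left fun hzero => hinj.not_eventually_eq hs hz ?_
  obtain ⟨r, hr, hball⟩ := Metric.eventually_nhds_iff_ball.1 (hzero.and (hs.mem_nhds hz))
  filter_upwards [ball_mem_nhds z hr] with w hw
  exact isOpen_ball.is_const_of_deriv_eq_zero (convex_ball z r).isPreconnected
    (hg.mono fun y hy => (hball y hy).2) (fun y hy => (hball y hy).1) hw (mem_ball_self hr)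

theorem Set.InjOn.continuousAt_invFunOn (hinj : InjOn g s) (hs : IsOpen s)
    (hg : DifferentiableOn ℂ g s) {z : ℂ} (hz : z ∈ s) :
    ContinuousAt (invFunOn g s) (g z) := by
  have hleft : invFunOn g s ∘ g =ᶠ[𝓝 z] id :=
    eventually_of_mem (hs.mem_nhds hz) fun _ hw => hinj.leftInvOn_invFunOn hw
  calc map (invFunOn g s) (𝓝 (g z))
      ≤ map (invFunOn g s) (map g (𝓝 z)) := map_mono (hinj.nhds_le_map_nhds hs hg hz)
    _ = 𝓝 (invFunOn g s (g z)) := by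
      rw [map_map, map_congr hleft, map_id, hinj.leftInvOn_invFunOn hz]

theorem Set.InjOn.differentiableOn_invFunOn (hinj : InjOn g s) (hs : IsOpen s)
    (hg : DifferentiableOn ℂ g s) : DifferentiableOn ℂ (invFunOn g s) (g '' s) := by
  set k := invFunOn g s
  have hkg : ∀ z ∈ s, k (g z) = z := fun z hz => hinj.leftInvOn_invFunOn hz
  have hcont : ∀ z ∈ s, ContinuousAt k (g z) := fun z hz => hinj.continuousAt_invFunOn hs hg hz
  have hright : ∀ z ∈ s, ∀ᶠ y in 𝓝 (g z), g (k y) = y := fun z hz => by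
    filter_upwards [hinj.nhds_le_map_nhds hs hg hz (image_mem_map (hs.mem_nhds hz))]
      with y hy using invFunOn_eq hy
  have hdiff : ∀ z ∈ s, deriv g z ≠ 0 → DifferentiableAt ℂ k (g z) := fun z hz hne => by
    refine (HasDerivAt.of_local_left_inverse (hcont z hz) ?_ hne (hright z hz)).differentiableAt
    rw [hkg z hz]
    exact (hg.differentiableAt (hs.mem_nhds hz)).hasDerivAt
  rintro _ ⟨z, hz, rfl⟩
  have hk_punctured : Tendsto k (𝓝[≠] (g z)) (𝓝[≠] z) := by
    refine tendsto_nhdsWithin_iff.2 ⟨?_, ?_⟩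
    · simpa only [hkg z hz] using (hcont z hz).tendsto.mono_left nhdsWithin_le_nhds
    filter_upwards [self_mem_nhdsWithin, nhdsWithin_le_nhds (hright z hz)] with y hy hgy hkz
    exact hy (by rw [← hgy, hkz]; exact mem_singleton _)
  -- critical points of `g` are isolated, and `k` is continuous there: the singularity is removable
  have hk_diff : ∀ᶠ y in 𝓝[≠] (g z), DifferentiableAt ℂ k y := by
    filter_upwards [hk_punctured.eventually ((hinj.eventually_deriv_ne_zero hs hg hz).and
        (mem_nhdsWithin_of_mem_nhds (hs.mem_nhds hz))),
      nhdsWithin_le_nhds (hright z hz)] with y ⟨hne, hys⟩ hy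
    simpa only [hy] using hdiff _ hys hne
  exact (analyticAt_of_differentiable_on_punctured_nhds_of_continuousAt hk_diff
    (hcont z hz)).differentiableAt.differentiableWithinAt

end InverseFunction

section Disc

variable {g : ℂ → ℂ} {R : ℝ}

theorem nonempty_ball_sdiff_zero (hR : 0 < R) : (ball (0 : ℂ) R \ {0}).Nonempty :=
  Filter.nonempty_of_mem (sdiff_mem_nhdsWithin_compl (ball_mem_nhds 0 hR) {0})

theorem apply_zero_eq_zero_of_bijOn_ball_sdiff_zero (hR : 0 < R)
    (hg : DifferentiableOn ℂ g (ball 0 R)) (hbij : BijOn g (ball 0 R \ {0}) (ball 0 R \ {0})) :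
    g 0 = 0 := by
  have hU : IsOpen (ball (0 : ℂ) R \ {0}) := isOpen_ball.sdiff isClosed_singleton
  obtain ⟨z₀, hz₀⟩ := nonempty_ball_sdiff_zero hR
  have hnc : ¬∃ w, ∀ z ∈ ball 0 R, g z = w := fun ⟨w, hw⟩ =>
    hbij.injOn.not_eventually_eq hU hz₀ <| by
      filter_upwards [isOpen_ball.mem_nhds hz₀.1] with z hz
      rw [hw z hz, hw _ hz₀.1]
  have hopen := ((hg.analyticOnNhd isOpen_ball).is_constant_or_isOpen
    (convex_ball 0 R).isPreconnected).resolve_left hnc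
  have hle : ‖g 0‖ ≤ R := by
    refine le_of_tendsto (((hg.continuousOn.continuousAt (ball_mem_nhds 0 hR)).norm.tendsto)
      |>.mono_left (nhdsWithin_le_nhds (s := {0}ᶜ))) ?_
    filter_upwards [sdiff_mem_nhdsWithin_compl (ball_mem_nhds (0 : ℂ) hR) {0}] with z hz
    exact (mem_ball_zero_iff.1 (hbij.mapsTo hz).1).le
  have himage : g '' ball 0 R ⊆ closedBall 0 R := by
    rintro _ ⟨z, hz, rfl⟩
    rcases eq_or_ne z 0 with rfl | hz0
    · exact mem_closedBall_zero_iff.2 hle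
    · exact ball_subset_closedBall (hbij.mapsTo ⟨hz, hz0⟩).1
  have hmem : g 0 ∈ ball 0 R := by
    rw [← interior_closedBall 0 hR.ne']
    exact interior_maximal himage (hopen _ subset_rfl isOpen_ball) ⟨0, mem_ball_self hR, rfl⟩
  by_contra h0
  obtain ⟨z, hz, hgz⟩ := hbij.surjOn ⟨hmem, h0⟩
  exact hz.2 (hbij.injOn.of_sdiff_singleton isOpen_ball hopen hz.1 (mem_ball_self hR) hgz)

theorem norm_map_eq_norm_of_bijOn_ball (hg : DifferentiableOn ℂ g (ball 0 R))
    (hbij : BijOn g (ball 0 R) (ball 0 R)) (h0 : g 0 = 0) {z : ℂ} (hz : z ∈ ball 0 R) :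
    ‖g z‖ = ‖z‖ := by
  set k := invFunOn g (ball 0 R)
  have hk : DifferentiableOn ℂ k (ball 0 R) :=
    hbij.image_eq ▸ hbij.injOn.differentiableOn_invFunOn isOpen_ball hg
  have hkg : LeftInvOn k g (ball 0 R) := hbij.injOn.leftInvOn_invFunOn
  have hk0 : k 0 = 0 := by simpa only [h0] using hkg (mem_ball_self (pos_of_mem_ball hz))
  refine le_antisymm (norm_le_norm_of_mapsTo_ball hg
    (hbij.mapsTo.mono_right ball_subset_closedBall) h0 (mem_ball_zero_iff.1 hz)) ?_
  calc ‖z‖ = ‖k (g z)‖ := by rw [hkg hz]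
    _ ≤ ‖g z‖ := norm_le_norm_of_mapsTo_ball hk
        (hbij.surjOn.mapsTo_invFunOn.mono_right ball_subset_closedBall) hk0
        (mem_ball_zero_iff.1 (hbij.mapsTo hz))

theorem exists_norm_eq_one_eqOn_mul_of_norm_map_eq_norm (hR : 0 < R)
    (hg : DifferentiableOn ℂ g (ball 0 R)) (hnorm : ∀ z ∈ ball 0 R, ‖g z‖ = ‖z‖) :
    ∃ a : ℂ, ‖a‖ = 1 ∧ EqOn g (fun z => a * z) (ball 0 R) := by
  have h0 : g 0 = 0 := norm_eq_zero.1 ((hnorm 0 (mem_ball_self hR)).trans norm_zero)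
  have hmaps : MapsTo g (ball 0 R) (closedBall (g 0) R) := fun z hz => by
    rw [h0, mem_closedBall_zero_iff, hnorm z hz]
    exact (mem_ball_zero_iff.1 hz).le
  obtain ⟨z₀, hz₀, hz₀0⟩ := nonempty_ball_sdiff_zero hR
  have hslope : ‖dslope g 0 z₀‖ = R / R := by
    rw [dslope_of_ne _ hz₀0, slope_def_module, h0, norm_smul, norm_inv, sub_zero, sub_zero,
      hnorm z₀ hz₀, inv_mul_cancel₀ (norm_ne_zero_iff.2 hz₀0), div_self hR.ne']
  obtain ⟨a, ha, hga⟩ := affine_of_mapsTo_ball_of_exists_norm_dslope_eq_div' hg hmaps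
    ⟨z₀, hz₀, hslope⟩
  refine ⟨a, by rwa [div_self hR.ne'] at ha, fun z hz => ?_⟩
  simpa [h0, mul_comm] using hga hz

end Disc

/-- Every conformal automorphism of the punctured open unit disc is a rotation about
the origin. -/
theorem conformal_automorphism_punctured_disc_is_rotation
    (f : ℂ → ℂ)
    (hf : DifferentiableOn ℂ f {z : ℂ | 0 < ‖z‖ ∧ ‖z‖ < 1})
    (hbij : Set.BijOn f {z : ℂ | 0 < ‖z‖ ∧ ‖z‖ < 1}
      {z : ℂ | 0 < ‖z‖ ∧ ‖z‖ < 1}) :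
    ∃ a : ℂ, ‖a‖ = 1 ∧
      ∀ z ∈ {z : ℂ | 0 < ‖z‖ ∧ ‖z‖ < 1}, f z = a * z := by
  have hU : {z : ℂ | 0 < ‖z‖ ∧ ‖z‖ < 1} = ball (0 : ℂ) 1 \ {0} := by
    ext z
    simp [norm_pos_iff, and_comm]
  rw [hU] at hf hbij ⊢
  set g := update f 0 (limUnder (𝓝[≠] 0) f)
  have hgf : EqOn g f (ball 0 1 \ {0}) := fun z hz => update_of_ne hz.2 _ _
  have hg : DifferentiableOn ℂ g (ball 0 1) :=
    differentiableOn_update_limUnder_of_bddAbove (ball_mem_nhds 0 one_pos) hf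
      ⟨1, by rintro _ ⟨z, hz, rfl⟩; exact (mem_ball_zero_iff.1 (hbij.mapsTo hz).1).le⟩
  have hbij' : BijOn g (ball 0 1 \ {0}) (ball 0 1 \ {0}) := hbij.congr hgf.symm
  have hg0 : g 0 = 0 := apply_zero_eq_zero_of_bijOn_ball_sdiff_zero one_pos hg hbij'
  have hbijB : BijOn g (ball 0 1) (ball 0 1) := by
    simpa [hg0, insert_eq_of_mem (mem_ball_self one_pos)] using
      hbij'.insert (a := 0) (by simp [hg0])
  obtain ⟨a, ha, hga⟩ := exists_norm_eq_one_eqOn_mul_of_norm_map_eq_norm one_pos hg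
    fun z hz => norm_map_eq_norm_of_bijOn_ball hg hbijB hg0 hz
  exact ⟨a, ha, fun z hz => (hgf hz).symm.trans (hga hz.1)⟩
end

section
/- Let D ⊆ ℝ² (with ℝ² = EuclideanSpace ℝ (Fin 2)) be a Jordan domain, i.e., the image of a continuous injective map f : B² → ℝ² where B² = Metric.closedBall 0 1. Then every continuous map g : ℝ² → ℝ² with g '' D ⊆ D has a fixed point in D: there exists p ∈ D with g(p) = p. In particular, every isometric equivalence ρ of ℝ² with ρ '' D = D fixes a point of D. -/
noncomputable section

/-!
A Jordan domain is homeomorphic to the closed unit disk, and the fixed point property is a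
topological invariant, so it suffices to prove Brouwer's theorem for the closed unit disk in `ℂ`.
If a self-map `k` of the disk had no fixed point, then `x ↦ x - k x`, continued across the
annulus `1 ≤ ‖x‖ ≤ 2` to the identity on the circle of radius `2`, would be a map from the disk
of radius `2` to `ℂ \ {0}` that is the identity on the boundary circle. The boundary circle would
then be null-homotopic in `ℂ \ {0}`, which lifting along the covering map `exp` rules out.
-/

open Set Metric Real
open scoped unitInterval

def FixedPointProperty (X : Type*) [TopologicalSpace X] : Prop :=
  ∀ f : X → X, Continuous f → ∃ x, Function.IsFixedPt f x

theorem FixedPointProperty.of_homeomorph {X Y : Type*} [TopologicalSpace X] [TopologicalSpace Y]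
    (e : X ≃ₜ Y) (hX : FixedPointProperty X) : FixedPointProperty Y := fun f hf ↦ by
  obtain ⟨x, hx⟩ := hX (e.symm ∘ f ∘ e) (by fun_prop)
  exact ⟨e x, e.symm_apply_eq.mp hx⟩

theorem FixedPointProperty.exists_isFixedPt_of_mapsTo {X : Type*} [TopologicalSpace X]
    {s : Set X} (hs : FixedPointProperty s) {g : X → X} (hg : ContinuousOn g s)
    (hgs : MapsTo g s s) : ∃ x ∈ s, Function.IsFixedPt g x := by
  obtain ⟨x, hx⟩ := hs (hgs.restrict g s s) (hg.mapsToRestrict hgs)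
  exact ⟨x, x.2, congrArg Subtype.val hx⟩

def expNeZero : C(ℂ, {z : ℂ // z ≠ 0}) := ⟨_, Complex.isCoveringMap_exp.continuous⟩

/-- Lifts of homotopic paths have the same endpoint, but the lift `t ↦ w + 2πit` of the loop
ends at `w + 2πi` while that of the constant loop stays at `w`. -/
theorem not_homotopicRel_exp_loop_const (w : ℂ) :
    ¬ (expNeZero.comp ⟨fun t : I ↦ w + 2 * π * Complex.I * (t : ℝ), by fun_prop⟩).HomotopicRel
      (expNeZero.comp (.const I w)) {0, 1} := fun h ↦ by
  have hlift := (Complex.isCoveringMap_exp.homotopicRel_iff_comp ⟨0, by simp, by simp⟩).mpr h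
  have hend := hlift.some.fst_eq_snd (x := 1) (by simp)
  simp [pi_ne_zero, Complex.I_ne_zero] at hend

theorem exists_eq_zero_of_eqOn_sphere {r : ℝ} (hr : 0 < r) {Ψ : ℂ → ℂ}
    (hΨ : ContinuousOn Ψ (closedBall 0 r)) (hid : EqOn Ψ id (sphere 0 r)) :
    ∃ z ∈ closedBall 0 r, Ψ z = 0 := by
  by_contra! hne
  have := contractibleSpace_closedBall (x := (0 : ℂ)) hr.le
  set w : ℂ := (Real.log r : ℂ)
  have hw : Complex.exp w = r := by rw [← Complex.ofReal_exp, Real.exp_log hr]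
  have hloop (t : ℝ) : Complex.exp (w + 2 * π * Complex.I * t) ∈ sphere 0 r := by
    simp [w, Complex.norm_exp, Real.exp_log hr]
  have hr_mem : (r : ℂ) ∈ sphere 0 r := by simp [abs_of_pos hr]
  let x₀ : closedBall (0 : ℂ) r := ⟨r, sphere_subset_closedBall hr_mem⟩
  let γ : Path x₀ x₀ :=
    { toFun t := ⟨Complex.exp (w + 2 * π * Complex.I * (t : ℝ)),
        sphere_subset_closedBall (hloop t)⟩
      continuous_toFun := by fun_prop
      source' := by ext; simp [hw, x₀]
      target' := by ext; simp [Complex.exp_add, hw, x₀] }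
  let Ψ' : C(closedBall (0 : ℂ) r, {z : ℂ // z ≠ 0}) :=
    ⟨fun z ↦ ⟨Ψ z, hne z z.2⟩, hΨ.domRestrict.subtype_mk _⟩
  have hnull := (SimplyConnectedSpace.paths_homotopic γ (.refl x₀)).map Ψ'
  apply not_homotopicRel_exp_loop_const w
  unfold Path.Homotopic Path.Homotopy at hnull
  unfold ContinuousMap.HomotopicRel
  convert hnull using 3
  · ext t
    exact (hid (hloop t)).symm
  · ext
    exact hw.trans (hid hr_mem).symm

section Retraction

variable (E : Type*) [NormedAddCommGroup E] [NormedSpace ℝ E]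

def closedBallRetraction : C(E, closedBall (0 : E) 1) where
  toFun x := ⟨(max 1 ‖x‖)⁻¹ • x, by
    have : 0 < max 1 ‖x‖ := lt_max_of_lt_left one_pos
    rw [mem_closedBall_zero_iff, norm_smul, norm_inv, Real.norm_of_nonneg this.le,
      inv_mul_le_one₀ this]
    exact le_max_right _ _⟩
  continuous_toFun := by
    refine Continuous.subtype_mk ?_ _
    exact ((continuous_const.max continuous_norm).inv₀
      fun x ↦ (lt_max_of_lt_left one_pos).ne').smul continuous_id

variable {E}

theorem closedBallRetraction_of_mem {x : E} (hx : x ∈ closedBall 0 1) :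
    (closedBallRetraction E x : E) = x := by
  simp [closedBallRetraction, max_eq_left (mem_closedBall_zero_iff.mp hx)]

end Retraction

theorem fixedPointProperty_closedBall_complex : FixedPointProperty (closedBall (0 : ℂ) 1) := by
  intro k hk
  by_contra! hfree
  let G : ℂ → ℂ := fun x ↦ k (closedBallRetraction ℂ x)
  obtain ⟨z, hz, hΨz⟩ := exists_eq_zero_of_eqOn_sphere two_pos
    (Ψ := fun x ↦ x - (min 1 (2 - ‖x‖) : ℝ) • G x) (by fun_prop)
    (fun x hx ↦ by simp [mem_sphere_zero_iff_norm.mp hx])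
  set c := min 1 (2 - ‖z‖)
  have hGz : ‖G z‖ ≤ 1 := mem_closedBall_zero_iff.mp (k _).2
  have hz_eq : z = c • G z := sub_eq_zero.mp hΨz
  have hc : 0 ≤ c := le_min zero_le_one (by linarith [mem_closedBall_zero_iff.mp hz])
  have hz1 : ‖z‖ ≤ 1 := by
    have : ‖z‖ ≤ c := by
      rw [hz_eq, norm_smul, Real.norm_of_nonneg hc]
      exact mul_le_of_le_one_right hc hGz
    linarith [min_le_right 1 (2 - ‖z‖)]
  have hc1 : c = 1 := min_eq_left (by linarith)
  have hz_mem : z ∈ closedBall 0 1 := mem_closedBall_zero_iff.mpr hz1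
  have hret : closedBallRetraction ℂ z = ⟨z, hz_mem⟩ :=
    Subtype.ext (closedBallRetraction_of_mem hz_mem)
  refine hfree ⟨z, hz_mem⟩ (Subtype.ext ?_)
  calc (k ⟨z, hz_mem⟩ : ℂ) = G z := by simp only [G, hret]
    _ = z := by simpa [hc1] using hz_eq.symm

theorem IsParam.nonempty_homeomorph {M : Type*} [MetricSpace M] {f : Plane → M} {D : Set M}
    (hf : IsParam f D) : Nonempty (B2 ≃ₜ D) := by
  obtain ⟨hc, hinj, rfl⟩ := hf
  have : CompactSpace B2 := isCompact_iff_compactSpace.mp (isCompact_closedBall 0 1)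
  exact ⟨Continuous.homeoOfEquivCompactToT2 (f := hinj.bijOn_image.equiv f)
    (hc.mapsToRestrict (mapsTo_image f B2))⟩

def closedBallHomeomorphB2 : closedBall (0 : ℂ) 1 ≃ₜ B2 :=
  Complex.orthonormalBasisOneI.repr.toHomeomorph.subtype fun x ↦ by simp [B2]

theorem IsJordanDomain.fixedPointProperty {M : Type*} [MetricSpace M] {D : Set M}
    (hD : IsJordanDomain D) : FixedPointProperty D := by
  obtain ⟨f, hf⟩ := hD
  obtain ⟨e⟩ := hf.nonempty_homeomorph
  exact fixedPointProperty_closedBall_complex.of_homeomorph (closedBallHomeomorphB2.trans e)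

/-- Brouwer fixed point theorem for Jordan domains: any continuous self-map of a Jordan
domain in the plane has a fixed point; in particular any isometric equivalence mapping
the domain onto itself fixes one of its points. -/
theorem jordan_domain_fixed_point
    (D : Set Plane) (hD : IsJordanDomain D) :
    (∀ g : Plane → Plane, Continuous g → g '' D ⊆ D → ∃ p ∈ D, g p = p) ∧
    (∀ ρ : Plane ≃ᵢ Plane, ⇑ρ '' D = D → ∃ p ∈ D, ρ p = p) := by
  have hself (g : Plane → Plane) (hg : Continuous g) (hgD : g '' D ⊆ D) : ∃ p ∈ D, g p = p :=
    hD.fixedPointProperty.exists_isFixedPt_of_mapsTo hg.continuousOn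
      (mapsTo_iff_image_subset.mpr hgD)
  exact ⟨hself, fun ρ hρ ↦ hself ρ ρ.continuous hρ.subset⟩
end
end
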